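/- arXiv:1101.5926 — 2 statements merged into one kernel-verified Lean document; each statement's English description precedes it below -/
import Mathlib

section
/- Let G=(V,W) be a connected edge-weighted graph with Vol(V)=1 and let λ_2 be the second smallest eigenvalue of the normalized Laplacian L_D. If λ_2 ≤ 1, then the isoperimetric number satisfies h(G) ≤ √(λ_2(2−λ_2)). -/
open Finset Matrix

noncomputable section

/-- weighted cut between two vertex subsets: `w(X,Y) = ∑_{i∈X} ∑_{j∈Y} w_{ij}` -/
def wcut {n : ℕ} (W : Matrix (Fin n) (Fin n) ℝ) (X Y : Finset (Fin n)) : ℝ :=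
  ∑ i ∈ X, ∑ j ∈ Y, W i j

/-- generalized degree `d_i = ∑_j w_{ij}` -/
def gdeg {n : ℕ} (W : Matrix (Fin n) (Fin n) ℝ) (i : Fin n) : ℝ := ∑ j, W i j

/-- volume of a vertex subset: `Vol(U) = ∑_{i∈U} d_i` -/
def gvol {n : ℕ} (W : Matrix (Fin n) (Fin n) ℝ) (U : Finset (Fin n)) : ℝ :=
  ∑ i ∈ U, gdeg W i

/-- the normalized adjacency matrix `D^{-1/2} W D^{-1/2}` -/
def normAdj {n : ℕ} (W : Matrix (Fin n) (Fin n) ℝ) : Matrix (Fin n) (Fin n) ℝ :=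
  Matrix.of fun i j => W i j / (Real.sqrt (gdeg W i) * Real.sqrt (gdeg W j))

/-- the normalized Laplacian `L_D = I - D^{-1/2} W D^{-1/2}` -/
def normLap {n : ℕ} (W : Matrix (Fin n) (Fin n) ℝ) : Matrix (Fin n) (Fin n) ℝ :=
  1 - normAdj W

/-- the normalized modularity matrix `B_D = D^{-1/2} W D^{-1/2} - √d √dᵀ` -/
def modMat {n : ℕ} (W : Matrix (Fin n) (Fin n) ℝ) : Matrix (Fin n) (Fin n) ℝ :=
  normAdj W - Matrix.of fun i j => Real.sqrt (gdeg W i) * Real.sqrt (gdeg W j)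

/-- Euclidean inner product on `ℝ^n` -/
def dotR {n : ℕ} (u v : Fin n → ℝ) : ℝ := ∑ i, u i * v i

/-- a family of pairwise orthogonal unit-norm vectors of `ℝ^n` -/
def IsOrthonormalSys {m n : ℕ} (u : Fin m → Fin n → ℝ) : Prop :=
  ∀ i j, dotR (u i) (u j) = if i = j then 1 else 0

/-- spectral norm (largest singular value) of a real matrix -/
def specNorm {n : ℕ} (M : Matrix (Fin n) (Fin n) ℝ) : ℝ :=
  ‖Matrix.toEuclideanCLM (𝕜 := ℝ) M‖

/-- connectivity of the weighted graph (irreducibility of `W`) -/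
def gConnected {n : ℕ} (W : Matrix (Fin n) (Fin n) ℝ) : Prop :=
  (SimpleGraph.fromRel fun i j => W i j ≠ 0).Connected

/-- the `a`-th cluster of the partition encoded by `P : Fin n → Fin k` -/
def partSet {n k : ℕ} (P : Fin n → Fin k) (a : Fin k) : Finset (Fin n) :=
  univ.filter fun j => P j = a

/-- `(A,B)` is an `α`-volume regular pair:
for all `X ⊆ A`, `Y ⊆ B`, `|w(X,Y) - ρ(A,B) Vol(X) Vol(Y)| ≤ α √(Vol(A) Vol(B))`,
where `ρ(A,B) = w(A,B)/(Vol(A) Vol(B))`. -/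
def volReg {n : ℕ} (W : Matrix (Fin n) (Fin n) ℝ) (α : ℝ) (A B : Finset (Fin n)) : Prop :=
  ∀ X ⊆ A, ∀ Y ⊆ B,
    |wcut W X Y - wcut W A B / (gvol W A * gvol W B) * (gvol W X * gvol W Y)|
      ≤ α * Real.sqrt (gvol W A * gvol W B)

/-- isoperimetric number `h(G) = min_{U : Vol(U) ≤ 1/2} w(U, U̅)/Vol(U)` -/
def isoNum {n : ℕ} (W : Matrix (Fin n) (Fin n) ℝ) : ℝ :=
  sInf {r | ∃ U : Finset (Fin n), U.Nonempty ∧ gvol W U ≤ 1/2 ∧ r = wcut W U Uᶜ / gvol W U}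

/-- weighted cluster center of scalar vertex representatives -/
def sCenter {n k : ℕ} (d : Fin n → ℝ) (x : Fin n → ℝ) (P : Fin n → Fin k) (a : Fin k) : ℝ :=
  (∑ j ∈ partSet P a, d j)⁻¹ * ∑ j ∈ partSet P a, d j * x j

/-- weighted k-variance of scalar vertex representatives w.r.t. the partition `P` -/
def sVar {n k : ℕ} (d : Fin n → ℝ) (x : Fin n → ℝ) (P : Fin n → Fin k) : ℝ :=
  ∑ a, ∑ j ∈ partSet P a, d j * (x j - sCenter d x P a) ^ 2

/-- minimum weighted 2-variance `S_2²` of scalar vertex representatives -/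
def S2var {n : ℕ} (d : Fin n → ℝ) (x : Fin n → ℝ) : ℝ :=
  sInf {r | ∃ P : Fin n → Fin 2, Function.Surjective P ∧ r = sVar d x P}

/-- weighted cluster center of vector vertex representatives -/
def vCenter {n k m : ℕ} (d : Fin n → ℝ) (x : Fin n → Fin m → ℝ) (P : Fin n → Fin k) (a : Fin k) :
    Fin m → ℝ :=
  fun t => (∑ j ∈ partSet P a, d j)⁻¹ * ∑ j ∈ partSet P a, d j * x j t

/-- weighted k-variance `S_k²(P, X)` of vector vertex representatives w.r.t. the partition `P` -/
def kVar {n k m : ℕ} (d : Fin n → ℝ) (x : Fin n → Fin m → ℝ) (P : Fin n → Fin k) : ℝ :=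
  ∑ a, ∑ j ∈ partSet P a, d j * ∑ t, (x j t - vCenter d x P a t) ^ 2

/-- normalized k-way cut of the partition `P`  -/
def fkCut {n k : ℕ} (W : Matrix (Fin n) (Fin n) ℝ) (P : Fin n → Fin k) : ℝ :=
  ∑ a, ∑ b ∈ univ.filter (fun b => a < b),
    (1 / gvol W (partSet P a) + 1 / gvol W (partSet P b)) * wcut W (partSet P a) (partSet P b)

/-- minimum normalized k-way cut `f_k(G)` (minimum over k-partitions with nonempty parts) -/
def fkMin {n : ℕ} (k : ℕ) (W : Matrix (Fin n) (Fin n) ℝ) : ℝ :=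
  sInf {r | ∃ P : Fin n → Fin k, Function.Surjective P ∧ r = fkCut W P}

/-- normalized k-way Newman-Girvan modularity of the partition `P` -/
def QMod {n k : ℕ} (W : Matrix (Fin n) (Fin n) ℝ) (P : Fin n → Fin k) : ℝ :=
  ∑ a, (gvol W (partSet P a))⁻¹ *
    (∑ i ∈ partSet P a, ∑ j ∈ partSet P a, (W i j - gdeg W i * gdeg W j))

/-- squared Euclidean distance of a vector from a linear subspace of `ℝ^n` -/
def distSqToSub {n : ℕ} (u : Fin n → ℝ) (F : Submodule ℝ (Fin n → ℝ)) : ℝ :=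
  sInf {r | ∃ v ∈ F, r = dotR (u - v) (u - v)}


/-!
Take a `λ₂`-eigenvector `v` of `L_D` orthogonal to `√d`, put `f = D^{-1/2} v`, choose its sign so
that `{f > 0}` has volume at most `1/2`, and let `g = max f 0`. The eigenvalue equation gives
`Q := ∑ w_ij (g_i - g_j)² ≤ 2 λ₂ M` with `M = ∑ d_i g_i²`, and Cauchy–Schwarz gives
`T := ∑ w_ij |g_i² - g_j²| ≤ √(Q (4M - Q)) ≤ 2 √(λ₂ (2 - λ₂)) M`. Every positive level set of `g²`
lies in `{f > 0}`, so the layer-cake decomposition of `g²` gives `T ≥ 2 h(G) M`.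
-/

lemma mul_dotProduct_eq_zero_of_mulVec_eq_zero {ι : Type*} [Fintype ι] {A : Matrix ι ι ℝ}
    (hA : A.IsSymm) {s v : ι → ℝ} {μ : ℝ} (hs : A *ᵥ s = 0) (hv : A *ᵥ v = μ • v) :
    μ * (s ⬝ᵥ v) = 0 := by
  rw [← smul_eq_mul, ← dotProduct_smul, ← hv, dotProduct_mulVec, ← mulVec_transpose, hA, hs,
    zero_dotProduct]

/-- The witness is `u₁`, or, when `s ⬝ᵥ u₁ ≠ 0` (which forces `μ = 0`), a combination of `u₀`
and `u₁`. -/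
lemma exists_eigenvector_dotProduct_eq_zero {ι : Type*} [Fintype ι] {A : Matrix ι ι ℝ}
    (hA : A.IsSymm) {s u₀ u₁ : ι → ℝ} {μ : ℝ} (hs : A *ᵥ s = 0)
    (h₀₀ : u₀ ⬝ᵥ u₀ = 1) (h₁₁ : u₁ ⬝ᵥ u₁ = 1) (h₀₁ : u₀ ⬝ᵥ u₁ = 0)
    (hu₀ : A *ᵥ u₀ = 0) (hu₁ : A *ᵥ u₁ = μ • u₁) :
    ∃ v, v ≠ 0 ∧ A *ᵥ v = μ • v ∧ s ⬝ᵥ v = 0 := by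
  by_cases hsu₁ : s ⬝ᵥ u₁ = 0
  · exact ⟨u₁, fun h => by simp [h] at h₁₁, hu₁, hsu₁⟩
  have hμ : μ = 0 :=
    (mul_eq_zero.mp (mul_dotProduct_eq_zero_of_mulVec_eq_zero hA hs hu₁)).resolve_right hsu₁
  refine ⟨(s ⬝ᵥ u₁) • u₀ - (s ⬝ᵥ u₀) • u₁, fun h => hsu₁ ?_, ?_, ?_⟩
  · simpa [dotProduct_sub, dotProduct_smul, h₀₀, h₀₁] using congrArg (u₀ ⬝ᵥ ·) h
  · simp [mulVec_sub, mulVec_smul, hu₀, hu₁, hμ]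
  · simp only [dotProduct_sub, dotProduct_smul, smul_eq_mul]; ring

/-- `D^{1/2} f` is a `μ`-eigenvector of `L_D`. -/
def IsGenEigenvector {n : ℕ} (W : Matrix (Fin n) (Fin n) ℝ) (μ : ℝ) (f : Fin n → ℝ) : Prop :=
  ∀ i, gdeg W i * f i - ∑ j, W i j * f j = μ * (gdeg W i * f i)

section WeightedSums

variable {n : ℕ} {W : Matrix (Fin n) (Fin n) ℝ}

lemma gdeg_nonneg (hnn : ∀ i j, 0 ≤ W i j) (i : Fin n) : 0 ≤ gdeg W i :=
  sum_nonneg fun j _ => hnn i j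

lemma sum_sum_mul_swap (hsym : W.IsSymm) (F : Fin n → Fin n → ℝ) :
    ∑ i, ∑ j, W i j * F j i = ∑ i, ∑ j, W i j * F i j := by
  rw [Finset.sum_comm]
  exact sum_congr rfl fun i _ => sum_congr rfl fun j _ => by rw [hsym.apply]

lemma sum_sum_mul_sub_sq (hsym : W.IsSymm) (x : Fin n → ℝ) :
    ∑ i, ∑ j, W i j * (x i - x j) ^ 2
      = 2 * ∑ i, x i * (gdeg W i * x i - ∑ j, W i j * x j) := by
  calc ∑ i, ∑ j, W i j * (x i - x j) ^ 2
      = ∑ i, ∑ j, W i j * (x j * (x j - x i)) + ∑ i, ∑ j, W i j * (x i * (x i - x j)) := by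
        simp only [← sum_add_distrib, ← mul_add]
        exact sum_congr rfl fun i _ => sum_congr rfl fun j _ => by ring
    _ = 2 * ∑ i, ∑ j, W i j * (x i * (x i - x j)) := by
        rw [sum_sum_mul_swap hsym fun i j => x i * (x i - x j)]; ring
    _ = _ := by
        congr 1
        refine sum_congr rfl fun i _ => ?_
        simp only [gdeg, mul_sub, sum_sub_distrib, sum_mul, mul_sum]
        congr 1 <;> exact sum_congr rfl fun j _ => by ring

lemma sum_sum_mul_add_sq (hsym : W.IsSymm) (x : Fin n → ℝ) :
    ∑ i, ∑ j, W i j * (x i + x j) ^ 2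
      = 4 * ∑ i, gdeg W i * x i ^ 2 - ∑ i, ∑ j, W i j * (x i - x j) ^ 2 := by
  have hswap := sum_sum_mul_swap hsym fun i _ => x i ^ 2
  have hdeg : ∑ i, ∑ j, W i j * x i ^ 2 = ∑ i, gdeg W i * x i ^ 2 := by
    simp only [gdeg, sum_mul]
  calc ∑ i, ∑ j, W i j * (x i + x j) ^ 2
      = 2 * ∑ i, ∑ j, W i j * x j ^ 2 + 2 * ∑ i, ∑ j, W i j * x i ^ 2
          - ∑ i, ∑ j, W i j * (x i - x j) ^ 2 := by
        simp only [mul_sum, ← sum_add_distrib, ← sum_sub_distrib]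
        exact sum_congr rfl fun i _ => sum_congr rfl fun j _ => by ring
    _ = _ := by rw [hswap, hdeg]; ring

lemma sum_sum_mul_abs_indicator_sub (hsym : W.IsSymm) (S : Finset (Fin n)) :
    ∑ i, ∑ j, W i j * |(if i ∈ S then (1 : ℝ) else 0) - (if j ∈ S then 1 else 0)|
      = 2 * wcut W S Sᶜ := by
  set F : Fin n → Fin n → ℝ := fun i j => if i ∈ S ∧ j ∉ S then 1 else 0
  have hcut : ∑ i, ∑ j, W i j * F i j = wcut W S Sᶜ := by
    simp only [F, wcut, mul_ite, mul_one, mul_zero, ite_and, ← mem_compl, sum_ite_irrel,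
      sum_const_zero, sum_ite_mem, univ_inter]
  calc ∑ i, ∑ j, W i j * |(if i ∈ S then (1 : ℝ) else 0) - (if j ∈ S then 1 else 0)|
      = ∑ i, ∑ j, W i j * F j i + ∑ i, ∑ j, W i j * F i j := by
        simp only [← sum_add_distrib, ← mul_add]
        refine sum_congr rfl fun i _ => sum_congr rfl fun j _ => ?_
        by_cases hi : i ∈ S <;> by_cases hj : j ∈ S <;> simp [F, hi, hj]
    _ = _ := by rw [sum_sum_mul_swap hsym, hcut]; ring

lemma sq_sum_sum_mul_abs_sq_sub_sq_le (hnn : ∀ i j, 0 ≤ W i j) (x : Fin n → ℝ) :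
    (∑ i, ∑ j, W i j * |x i ^ 2 - x j ^ 2|) ^ 2
      ≤ (∑ i, ∑ j, W i j * (x i - x j) ^ 2) * ∑ i, ∑ j, W i j * (x i + x j) ^ 2 := by
  simp only [← Fintype.sum_prod_type']
  refine sum_sq_le_sum_mul_sum_of_sq_le_mul _ (fun p _ => by have := hnn p.1 p.2; positivity)
    (fun p _ => by have := hnn p.1 p.2; positivity) fun p _ => le_of_eq ?_
  rw [show x p.1 ^ 2 - x p.2 ^ 2 = (x p.1 - x p.2) * (x p.1 + x p.2) by ring, abs_mul, mul_pow,
    mul_pow, sq_abs, sq_abs]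
  ring

lemma abs_sub_eq_mul_abs_indicator_sub_add {ι : Type*} [DecidableEq ι] {S : Finset ι}
    {h : ι → ℝ} {m : ℝ} (h_nonneg : ∀ i, 0 ≤ h i) (hmin : ∀ i ∈ S, m ≤ h i)
    (h_off : ∀ i ∉ S, h i = 0) (i j : ι) :
    |h i - h j| = m * |(if i ∈ S then (1 : ℝ) else 0) - (if j ∈ S then 1 else 0)|
      + |(h i - m * if i ∈ S then 1 else 0) - (h j - m * if j ∈ S then 1 else 0)| := by
  by_cases hi : i ∈ S <;> by_cases hj : j ∈ S <;> simp [hi, hj, h_off]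
  · rw [abs_of_nonneg (h_nonneg i), abs_of_nonneg (sub_nonneg.2 (hmin i hi))]; ring
  · rw [abs_sub_comm, abs_of_nonneg (h_nonneg j), abs_of_nonneg (sub_nonneg.2 (hmin j hj))]; ring

/-- Discrete layer-cake (coarea) inequality: peel off the lowest positive level of `h` and
induct on its support. -/
lemma two_mul_sum_gdeg_mul_le (hsym : W.IsSymm) (κ : ℝ) (T : Finset (Fin n))
    (hT : ∀ U ⊆ T, U.Nonempty → κ * gvol W U ≤ wcut W U Uᶜ)
    (h : Fin n → ℝ) (h_nonneg : ∀ i, 0 ≤ h i) (h_supp : ∀ i, h i ≠ 0 → i ∈ T) :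
    2 * κ * ∑ i, gdeg W i * h i ≤ ∑ i, ∑ j, W i j * |h i - h j| := by
  induction T using Finset.strongInduction generalizing h with
  | H T ih =>
  set S := univ.filter (h · ≠ 0)
  have hST : S ⊆ T := fun i hi => h_supp i (mem_filter.mp hi).2
  have h_off : ∀ i ∉ S, h i = 0 := by simp [S]
  rcases S.eq_empty_or_nonempty with hS | hS
  · simp [h_off, hS]
  obtain ⟨i₀, hi₀, hmin⟩ := S.exists_min_image h hS
  set m := h i₀
  set χ : Fin n → ℝ := fun i => if i ∈ S then 1 else 0
  set h' : Fin n → ℝ := fun i => h i - m * χ i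
  have h'_nonneg : ∀ i, 0 ≤ h' i := fun i => by
    by_cases hi : i ∈ S
    · simpa [h', χ, hi] using hmin i hi
    · simpa [h', χ, hi] using h_nonneg i
  have h'_supp : ∀ i, h' i ≠ 0 → i ∈ S.erase i₀ := fun i hi' => by
    by_cases hi : i ∈ S
    · exact mem_erase.mpr ⟨by rintro rfl; simp [h', χ, hi, m] at hi', hi⟩
    · simp [h', χ, hi, h_off i hi] at hi'
  have ih' := ih (S.erase i₀) ((erase_ssubset hi₀).trans_subset hST)
    (fun U hU => hT U (hU.trans ((erase_subset _ _).trans hST))) h' h'_nonneg h'_supp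
  have hvol : ∑ i, gdeg W i * h i = m * gvol W S + ∑ i, gdeg W i * h' i := by
    have hχ : ∑ i, gdeg W i * χ i = gvol W S := by
      simp only [χ, gvol, mul_ite, mul_one, mul_zero, sum_ite_mem, univ_inter]
    simp only [h', mul_sub, sum_sub_distrib, mul_left_comm (gdeg W _) m, ← mul_sum, hχ]
    ring
  have habs : ∑ i, ∑ j, W i j * |h i - h j|
      = m * (2 * wcut W S Sᶜ) + ∑ i, ∑ j, W i j * |h' i - h' j| := by
    simp only [← sum_sum_mul_abs_indicator_sub hsym S,
      abs_sub_eq_mul_abs_indicator_sub_add h_nonneg hmin h_off, mul_add, sum_add_distrib, mul_sum]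
    congr 1
    exact sum_congr rfl fun i _ => sum_congr rfl fun j _ => by ring
  have hm : 0 ≤ m := h_nonneg i₀
  have hcut := hT S hST hS
  rw [hvol, habs]
  nlinarith

lemma isoNum_mul_gvol_le (hnn : ∀ i j, 0 ≤ W i j) (hd : ∀ i, 0 < gdeg W i)
    {U : Finset (Fin n)} (hU : U.Nonempty) (hU_half : gvol W U ≤ 1 / 2) :
    isoNum W * gvol W U ≤ wcut W U Uᶜ := by
  have hU_pos : 0 < gvol W U := sum_pos (fun i _ => hd i) hU
  rw [← le_div_iff₀ hU_pos]
  refine csInf_le ⟨0, ?_⟩ ⟨U, hU, hU_half, rfl⟩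
  rintro r ⟨V, -, -, rfl⟩
  exact div_nonneg (sum_nonneg fun i _ => sum_nonneg fun j _ => hnn i j)
    (sum_nonneg fun i _ => gdeg_nonneg hnn i)

end WeightedSums

section GenEigenvector

variable {n : ℕ} {W : Matrix (Fin n) (Fin n) ℝ} {μ : ℝ} {f : Fin n → ℝ}

lemma IsGenEigenvector.neg (hf : IsGenEigenvector W μ f) : IsGenEigenvector W μ (-f) := by
  intro i
  simp only [Pi.neg_apply, mul_neg, sum_neg_distrib]
  linarith [hf i]

lemma sum_sum_mul_posPart_sub_sq_le (hsym : W.IsSymm) (hnn : ∀ i j, 0 ≤ W i j)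
    (hf : IsGenEigenvector W μ f) :
    ∑ i, ∑ j, W i j * (max (f i) 0 - max (f j) 0) ^ 2
      ≤ 2 * μ * ∑ i, gdeg W i * max (f i) 0 ^ 2 := by
  rw [sum_sum_mul_sub_sq hsym, mul_assoc, mul_sum _ _ μ]
  refine mul_le_mul_of_nonneg_left (sum_le_sum fun i _ => ?_) (by norm_num)
  rcases le_or_gt (f i) 0 with hfi | hfi
  · simp [max_eq_right hfi]
  · have hW : ∑ j, W i j * f j ≤ ∑ j, W i j * max (f j) 0 :=
      sum_le_sum fun j _ => mul_le_mul_of_nonneg_left (le_max_left _ _) (hnn i j)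
    rw [max_eq_left hfi.le]
    nlinarith [hf i]

lemma sum_sum_mul_abs_posPart_sq_sub_le (hsym : W.IsSymm) (hnn : ∀ i j, 0 ≤ W i j)
    (hμ : μ ≤ 1) (hf : IsGenEigenvector W μ f) :
    ∑ i, ∑ j, W i j * |max (f i) 0 ^ 2 - max (f j) 0 ^ 2|
      ≤ 2 * √(μ * (2 - μ)) * ∑ i, gdeg W i * max (f i) 0 ^ 2 := by
  set M := ∑ i, gdeg W i * max (f i) 0 ^ 2
  set Q := ∑ i, ∑ j, W i j * (max (f i) 0 - max (f j) 0) ^ 2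
  set T := ∑ i, ∑ j, W i j * |max (f i) 0 ^ 2 - max (f j) 0 ^ 2|
  have hQ : Q ≤ 2 * μ * M := sum_sum_mul_posPart_sub_sq_le hsym hnn hf
  have hQ0 : 0 ≤ Q := sum_nonneg fun i _ => sum_nonneg fun j _ =>
    mul_nonneg (hnn i j) (sq_nonneg _)
  have hM0 : 0 ≤ M := sum_nonneg fun i _ => mul_nonneg (gdeg_nonneg hnn i) (sq_nonneg _)
  have hCS : T ^ 2 ≤ Q * (4 * M - Q) := by
    have h := sq_sum_sum_mul_abs_sq_sub_sq_le hnn fun i => max (f i) 0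
    rwa [sum_sum_mul_add_sq hsym] at h
  -- `Q (4M - Q)` increases in `Q ≤ 2M`, so it is maximal at `Q = 2μM`
  have hT : T ^ 2 ≤ μ * (2 - μ) * (2 * M) ^ 2 := by
    nlinarith [mul_nonneg (sub_nonneg.2 hQ) (show 0 ≤ 4 * M - Q - 2 * μ * M by nlinarith)]
  calc T ≤ √(μ * (2 - μ) * (2 * M) ^ 2) := Real.le_sqrt_of_sq_le hT
    _ = 2 * √(μ * (2 - μ)) * M := by
      rw [Real.sqrt_mul' _ (sq_nonneg _), Real.sqrt_sq (by positivity)]; ring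

lemma isoNum_le_of_isGenEigenvector (hsym : W.IsSymm) (hnn : ∀ i j, 0 ≤ W i j)
    (hd : ∀ i, 0 < gdeg W i) (hμ : μ ≤ 1) (hf : IsGenEigenvector W μ f)
    (hpos : ∃ i, 0 < f i) (h_half : gvol W (univ.filter (0 < f ·)) ≤ 1 / 2) :
    isoNum W ≤ √(μ * (2 - μ)) := by
  set M := ∑ i, gdeg W i * max (f i) 0 ^ 2
  have hM : 0 < M := by
    obtain ⟨i, hi⟩ := hpos
    exact sum_pos' (fun j _ => mul_nonneg (gdeg_nonneg hnn j) (sq_nonneg _))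
      ⟨i, mem_univ i, mul_pos (hd i) (by rw [max_eq_left hi.le]; positivity)⟩
  have hlow := two_mul_sum_gdeg_mul_le hsym (isoNum W) (univ.filter (0 < f ·))
    (fun U hU hU_ne => isoNum_mul_gvol_le hnn hd hU_ne <|
      (sum_le_sum_of_subset_of_nonneg hU fun i _ _ => (hd i).le).trans h_half)
    (fun i => max (f i) 0 ^ 2) (fun i => sq_nonneg _)
    (fun i hi => mem_filter.mpr ⟨mem_univ i, by
      by_contra hfi
      exact hi (by simp [max_eq_right (not_lt.mp hfi)])⟩)
  have hup := sum_sum_mul_abs_posPart_sq_sub_le hsym hnn hμ hf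
  nlinarith

end GenEigenvector

section NormalizedLaplacian

variable {n : ℕ} {W : Matrix (Fin n) (Fin n) ℝ}

lemma normLap_isSymm (hsym : W.IsSymm) : (normLap W).IsSymm := by
  refine isSymm_one.sub ?_
  ext i j
  simp [normAdj, hsym.apply, mul_comm]

lemma normLap_mulVec_sqrt_gdeg (hd : ∀ i, 0 < gdeg W i) :
    normLap W *ᵥ (fun i => √(gdeg W i)) = 0 := by
  ext i
  have hi := Real.sqrt_pos.mpr (hd i)
  have hadj : (normAdj W *ᵥ fun i => √(gdeg W i)) i = gdeg W i / √(gdeg W i) := by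
    refine Eq.trans ?_ (sum_div univ (W i) _).symm
    simp only [mulVec, dotProduct, normAdj, of_apply]
    exact sum_congr rfl fun j _ => by field_simp [(Real.sqrt_pos.mpr (hd j)).ne']
  simp [normLap, sub_mulVec, hadj, Real.div_sqrt]

lemma exists_isGenEigenvector_of_normLap (hd : ∀ i, 0 < gdeg W i) {μ : ℝ} {v : Fin n → ℝ}
    (hv0 : v ≠ 0) (hv : normLap W *ᵥ v = μ • v) (hvs : (fun i => √(gdeg W i)) ⬝ᵥ v = 0) :
    ∃ f, IsGenEigenvector W μ f ∧ f ≠ 0 ∧ ∑ i, gdeg W i * f i = 0 := by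
  have hsqrt : ∀ i, √(gdeg W i) ≠ 0 := fun i => (Real.sqrt_pos.mpr (hd i)).ne'
  have hdeg : ∀ i, gdeg W i * (v i / √(gdeg W i)) = √(gdeg W i) * v i := fun i => by
    field_simp
    rw [div_eq_iff (hsqrt i), mul_assoc, Real.mul_self_sqrt (hd i).le, mul_comm]
  refine ⟨fun i => v i / √(gdeg W i), fun i => ?_, fun h => hv0 ?_, ?_⟩
  · have hi := congrFun hv i
    have hadj : ∑ j, W i j * (v j / √(gdeg W j)) = √(gdeg W i) * (normAdj W *ᵥ v) i := by
      simp only [mulVec, dotProduct, normAdj, of_apply, mul_sum]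
      exact sum_congr rfl fun j _ => by field_simp [hsqrt i, hsqrt j]
    simp only [normLap, sub_mulVec, one_mulVec, Pi.sub_apply, Pi.smul_apply, smul_eq_mul] at hi
    rw [hdeg, hadj]
    linear_combination √(gdeg W i) * hi
  · ext i
    simpa [hsqrt i] using congrFun h i
  · simpa [hdeg, dotProduct] using hvs

end NormalizedLaplacian

section SignChoice

variable {n : ℕ} {W : Matrix (Fin n) (Fin n) ℝ}

lemma exists_pos_of_sum_gdeg_mul_eq_zero (hd : ∀ i, 0 < gdeg W i) {f : Fin n → ℝ} (hf0 : f ≠ 0)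
    (hsum : ∑ i, gdeg W i * f i = 0) : ∃ i, 0 < f i := by
  by_contra! hle
  refine hf0 (funext fun i => ?_)
  have h := (sum_eq_zero_iff_of_nonpos fun j _ =>
    mul_nonpos_of_nonneg_of_nonpos (hd j).le (hle j)).mp hsum i (mem_univ i)
  exact (mul_eq_zero.mp h).resolve_left (hd i).ne'

lemma exists_neg_or_self_gvol_pos_le_half (hd : ∀ i, 0 < gdeg W i) (hvol : gvol W univ = 1)
    {f : Fin n → ℝ} (hf0 : f ≠ 0) (hsum : ∑ i, gdeg W i * f i = 0) :
    ∃ g, (g = f ∨ g = -f) ∧ (∃ i, 0 < g i) ∧ gvol W (univ.filter (0 < g ·)) ≤ 1 / 2 := by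
  have hsum' : ∑ i, gdeg W i * (-f) i = 0 := by simp [hsum]
  have hdisj : Disjoint (univ.filter (0 < f ·)) (univ.filter (0 < (-f) ·)) :=
    disjoint_filter.mpr fun i _ hi => by simp at hi ⊢; linarith
  have htotal : gvol W (univ.filter (0 < f ·)) + gvol W (univ.filter (0 < (-f) ·)) ≤ 1 := by
    rw [← hvol, gvol, gvol, ← sum_union hdisj]
    exact sum_le_sum_of_subset_of_nonneg (subset_univ _) fun i _ _ => (hd i).le
  rcases le_or_gt (gvol W (univ.filter (0 < f ·))) (1 / 2) with h | h
  · exact ⟨f, .inl rfl, exists_pos_of_sum_gdeg_mul_eq_zero hd hf0 hsum, h⟩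
  · exact ⟨-f, .inr rfl, exists_pos_of_sum_gdeg_mul_eq_zero hd (neg_ne_zero.mpr hf0) hsum',
      by linarith⟩

end SignChoice

/-- if `λ₂ ≤ 1` then `h(G) ≤ √(λ₂ (2 - λ₂))`. -/
theorem statement6 {n : ℕ} (hn : 2 ≤ n) (W : Matrix (Fin n) (Fin n) ℝ)
    (hsym : W.IsSymm) (hnn : ∀ i j, 0 ≤ W i j)
    (hd : ∀ i, 0 < gdeg W i) (hvol : gvol W Finset.univ = 1)
    (lam : Fin n → ℝ) (u : Fin n → Fin n → ℝ)
    (hortho : IsOrthonormalSys u)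
    (heig : ∀ i, normLap W *ᵥ u i = lam i • u i)
    (h0 : lam ⟨0, by omega⟩ = 0)
    (hlam : lam ⟨1, by omega⟩ ≤ 1) :
    isoNum W ≤ Real.sqrt (lam ⟨1, by omega⟩ * (2 - lam ⟨1, by omega⟩)) := by
  set i₀ : Fin n := ⟨0, by omega⟩
  set i₁ : Fin n := ⟨1, by omega⟩
  have hortho' (i j : Fin n) : u i ⬝ᵥ u j = if i = j then 1 else 0 := hortho i j
  obtain ⟨v, hv0, hv, hvs⟩ := exists_eigenvector_dotProduct_eq_zero (normLap_isSymm hsym)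
    (normLap_mulVec_sqrt_gdeg hd) (by simpa using hortho' i₀ i₀) (by simpa using hortho' i₁ i₁)
    (by simpa [i₀, i₁, Fin.ext_iff] using hortho' i₀ i₁) (by rw [heig, h0, zero_smul]) (heig i₁)
  obtain ⟨f, hf, hf0, hsum⟩ := exists_isGenEigenvector_of_normLap hd hv0 hv hvs
  obtain ⟨g, rfl | rfl, hpos, h_half⟩ := exists_neg_or_self_gvol_pos_le_half hd hvol hf0 hsum
  · exact isoNum_le_of_isGenEigenvector hsym hnn hd hlam hf hpos h_half
  · exact isoNum_le_of_isGenEigenvector hsym hnn hd hlam hf.neg hpos h_half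

end
end

section
/- Let G=(V,W) be an edge-weighted graph with positive generalized degrees and Vol(V)=1, and let 0 = λ_1 ≤ λ_2 ≤ ... ≤ λ_n be the eigenvalues of the normalized Laplacian L_D. Then for every integer 2 ≤ k ≤ n, the minimum normalized k-way cut satisfies f_k(G) ≥ Σ_{i=1}^k λ_i. -/
open Finset Matrix

noncomputable section

/-!
For a `k`-partition with parts `V_a`, the vectors `z_a = D^{1/2} 1_{V_a} / √Vol(V_a)` are
orthonormal and `⟪z_a, L_D z_a⟫ = 1 - w(V_a, V_a) / Vol(V_a)`; as the rows of `W` sum to the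
degrees, these Rayleigh quotients add up to the normalized cut `f_k(P_k, G)`. Expanding in the
eigenbasis, `∑_a ⟪z_a, L_D z_a⟫ = ∑_i λ_i s_i` with `s_i = ∑_a ⟪z_a, u_i⟫²`. By Bessel
`s_i ≤ 1`, by Parseval `∑_i s_i = k`, and for increasing `λ` such a weighted sum is at least
`λ_1 + ⋯ + λ_k` (Ky Fan).
-/

open scoped RealInnerProductSpace

theorem Monotone.sum_filter_lt_le_sum_mul {n : ℕ} {lam : Fin n → ℝ} (hmono : Monotone lam)
    {s : Fin n → ℝ} (hs0 : ∀ i, 0 ≤ s i) (hs1 : ∀ i, s i ≤ 1) {k : ℕ} (hk : 0 < k)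
    (hkn : k ≤ n) (hsum : ∑ i, s i = k) :
    ∑ i ∈ univ.filter (fun i : Fin n => (i : ℕ) < k), lam i ≤ ∑ i, lam i * s i := by
  -- Termwise comparison with the threshold `c = lam (k - 1)`: the deficit `∑ (1_{i<k} - s i)` is 0.
  set c := lam ⟨k - 1, by omega⟩
  have hterm : ∀ i : Fin n,
      (if (i : ℕ) < k then lam i else 0) - lam i * s i
        ≤ c * ((if (i : ℕ) < k then 1 else 0) - s i) := by
    intro i
    split_ifs with h
    · have : lam i ≤ c := hmono (Fin.mk_le_mk.2 (by omega))
      nlinarith [hs1 i]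
    · have : c ≤ lam i := hmono (Fin.mk_le_mk.2 (by omega))
      nlinarith [hs0 i]
  have hcard : ∑ i : Fin n, (if (i : ℕ) < k then (1 : ℝ) else 0) = k := by
    rw [sum_boole, Fin.card_filter_val_lt, min_eq_right hkn]
  have := sum_le_sum fun i (_ : i ∈ univ) => hterm i
  rw [sum_sub_distrib, ← mul_sum, sum_sub_distrib, hcard, hsum, sub_self, mul_zero,
    ← sum_filter] at this
  linarith

theorem OrthonormalBasis.inner_map_self_eq_sum {E : Type*} [NormedAddCommGroup E]
    [InnerProductSpace ℝ E] {ι : Type*} [Fintype ι] (b : OrthonormalBasis ι ℝ E)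
    (T : E →ₗ[ℝ] E) {lam : ι → ℝ} (heig : ∀ i, T (b i) = lam i • b i) (x : E) :
    ⟪x, T x⟫ = ∑ i, lam i * ⟪b i, x⟫ ^ 2 := by
  nth_rw 2 [← b.sum_repr' x]
  simp only [map_sum, map_smul, heig, smul_smul, inner_sum, inner_smul_right]
  refine sum_congr rfl fun i _ => ?_
  rw [real_inner_comm]
  ring

theorem OrthonormalBasis.sum_filter_lt_le_sum_inner_map_self {E : Type*} [NormedAddCommGroup E]
    [InnerProductSpace ℝ E] {n k : ℕ} (b : OrthonormalBasis (Fin n) ℝ E) (T : E →ₗ[ℝ] E)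
    {lam : Fin n → ℝ} (hmono : Monotone lam) (heig : ∀ i, T (b i) = lam i • b i)
    {z : Fin k → E} (hz : Orthonormal ℝ z) (hk : 0 < k) (hkn : k ≤ n) :
    ∑ i ∈ univ.filter (fun i : Fin n => (i : ℕ) < k), lam i ≤ ∑ a, ⟪z a, T (z a)⟫ := by
  set s : Fin n → ℝ := fun i => ∑ a, ⟪z a, b i⟫ ^ 2
  have hs1 : ∀ i, s i ≤ 1 := fun i => by
    simpa [b.orthonormal.1 i] using hz.sum_inner_products_le (b i) (s := univ)
  have hsum : ∑ i, s i = k := by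
    rw [sum_comm]
    simp [b.sum_sq_inner_left, hz.1]
  calc ∑ i ∈ univ.filter (fun i : Fin n => (i : ℕ) < k), lam i
      ≤ ∑ i, lam i * s i :=
        hmono.sum_filter_lt_le_sum_mul (fun i => sum_nonneg fun _ _ => sq_nonneg _) hs1 hk hkn hsum
    _ = ∑ a, ⟪z a, T (z a)⟫ := by
        simp only [b.inner_map_self_eq_sum T heig, s, mul_sum, real_inner_comm (z _)]
        exact sum_comm

theorem Finset.sum_sum_filter_lt_add_swap {ι M : Type*} [Fintype ι] [LinearOrder ι]
    [AddCommMonoid M] (F : ι → ι → M) :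
    ∑ a, ∑ b ∈ univ.filter (a < ·), (F a b + F b a) = ∑ a, ∑ b ∈ univ.erase a, F a b := by
  have hswap : ∑ a, ∑ b ∈ univ.filter (a < ·), F b a = ∑ a, ∑ b ∈ univ.filter (· < a), F a b := by
    simp only [sum_filter]
    exact sum_comm
  simp only [sum_add_distrib]
  rw [hswap, ← sum_add_distrib]
  refine sum_congr rfl fun a _ => ?_
  rw [← filter_ne', sum_filter, sum_filter, sum_filter, ← sum_add_distrib]
  refine sum_congr rfl fun b _ => ?_
  rcases lt_trichotomy a b with h | rfl | h
  · simp [h, h.not_gt, h.ne']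
  · simp
  · simp [h, h.not_gt, h.ne]

namespace IsOrthonormalSys

variable {n : ℕ} {u : Fin n → Fin n → ℝ}

theorem orthonormal_toLp (hu : IsOrthonormalSys u) : Orthonormal ℝ fun i => WithLp.toLp 2 (u i) :=
  orthonormal_iff_ite.2 fun i j => by
    rw [EuclideanSpace.inner_toLp_toLp, star_trivial, dotProduct_comm]
    exact hu i j

def toOrthonormalBasis (hu : IsOrthonormalSys u) :
    OrthonormalBasis (Fin n) ℝ (EuclideanSpace ℝ (Fin n)) :=
  .mk hu.orthonormal_toLp
    (hu.orthonormal_toLp.linearIndependent.span_eq_top_of_card_eq_finrank' (by simp)).ge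

@[simp]
theorem coe_toOrthonormalBasis (hu : IsOrthonormalSys u) :
    ⇑hu.toOrthonormalBasis = fun i => WithLp.toLp 2 (u i) :=
  OrthonormalBasis.coe_mk _ _

end IsOrthonormalSys

section PartitionVectors

variable {n k : ℕ} {W : Matrix (Fin n) (Fin n) ℝ}

def sqrtDegIndicator (W : Matrix (Fin n) (Fin n) ℝ) (X : Finset (Fin n)) : Fin n → ℝ :=
  fun i => if i ∈ X then √(gdeg W i) else 0

theorem sqrtDegIndicator_dotProduct (hd : ∀ i, 0 ≤ gdeg W i) (X Y : Finset (Fin n)) :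
    sqrtDegIndicator W X ⬝ᵥ sqrtDegIndicator W Y = gvol W (X ∩ Y) := by
  have hterm : ∀ i, sqrtDegIndicator W X i * sqrtDegIndicator W Y i
      = if i ∈ X ∩ Y then gdeg W i else 0 := fun i => by
    by_cases hX : i ∈ X <;> by_cases hY : i ∈ Y <;>
      simp [sqrtDegIndicator, hX, hY, Real.mul_self_sqrt (hd i)]
  simp only [dotProduct, hterm, sum_ite_mem, univ_inter, gvol]

theorem sqrtDegIndicator_dotProduct_normAdj_mulVec (hd : ∀ i, 0 < gdeg W i)
    (X Y : Finset (Fin n)) :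
    sqrtDegIndicator W X ⬝ᵥ (normAdj W *ᵥ sqrtDegIndicator W Y) = wcut W X Y := by
  have hterm : ∀ i j, sqrtDegIndicator W X i * (normAdj W i j * sqrtDegIndicator W Y j)
      = if i ∈ X then (if j ∈ Y then W i j else 0) else 0 := fun i j => by
    have hi := (Real.sqrt_pos.2 (hd i)).ne'
    have hj := (Real.sqrt_pos.2 (hd j)).ne'
    by_cases hX : i ∈ X <;> by_cases hY : j ∈ Y <;> simp [sqrtDegIndicator, normAdj, hX, hY]
    field_simp
  simp only [dotProduct, mulVec, mul_sum, hterm]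
  simp [sum_ite_mem, wcut]

theorem sqrtDegIndicator_dotProduct_normLap_mulVec (hd : ∀ i, 0 < gdeg W i)
    (X Y : Finset (Fin n)) :
    sqrtDegIndicator W X ⬝ᵥ (normLap W *ᵥ sqrtDegIndicator W Y) = gvol W (X ∩ Y) - wcut W X Y := by
  rw [normLap, sub_mulVec, one_mulVec, dotProduct_sub,
    sqrtDegIndicator_dotProduct (fun i => (hd i).le),
    sqrtDegIndicator_dotProduct_normAdj_mulVec hd]

theorem gvol_partSet_pos (hd : ∀ i, 0 < gdeg W i) {P : Fin n → Fin k}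
    (hP : Function.Surjective P) (a : Fin k) : 0 < gvol W (partSet P a) := by
  obtain ⟨j, hj⟩ := hP a
  exact sum_pos (fun i _ => hd i) ⟨j, by simp [partSet, hj]⟩

def partVec (W : Matrix (Fin n) (Fin n) ℝ) (P : Fin n → Fin k) (a : Fin k) :
    EuclideanSpace ℝ (Fin n) :=
  WithLp.toLp 2 ((√(gvol W (partSet P a)))⁻¹ • sqrtDegIndicator W (partSet P a))

theorem orthonormal_partVec (hd : ∀ i, 0 < gdeg W i) {P : Fin n → Fin k}
    (hP : Function.Surjective P) : Orthonormal ℝ (partVec W P) := by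
  refine orthonormal_iff_ite.2 fun a b => ?_
  rw [partVec, partVec, EuclideanSpace.inner_toLp_toLp, star_trivial, smul_dotProduct,
    dotProduct_smul, sqrtDegIndicator_dotProduct (fun i => (hd i).le)]
  split_ifs with hab
  · subst hab
    have hV := gvol_partSet_pos hd hP a
    rw [inter_self, smul_smul, smul_eq_mul, ← mul_inv, Real.mul_self_sqrt hV.le,
      inv_mul_cancel₀ hV.ne']
  · have hdisj : Disjoint (partSet P b) (partSet P a) :=
      disjoint_filter.2 fun i _ hb ha => hab (ha.symm.trans hb)
    simp [disjoint_iff_inter_eq_empty.1 hdisj, gvol]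

theorem inner_partVec_normLap (hd : ∀ i, 0 < gdeg W i) {P : Fin n → Fin k}
    (hP : Function.Surjective P) (a : Fin k) :
    ⟪partVec W P a, toEuclideanLin (normLap W) (partVec W P a)⟫
      = 1 - wcut W (partSet P a) (partSet P a) / gvol W (partSet P a) := by
  have hV := gvol_partSet_pos hd hP a
  rw [partVec, toLpLin_toLp, EuclideanSpace.inner_toLp_toLp, star_trivial, toLin'_apply,
    mulVec_smul, smul_dotProduct, dotProduct_smul, dotProduct_comm,
    sqrtDegIndicator_dotProduct_normLap_mulVec hd, inter_self, smul_smul, smul_eq_mul,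
    ← mul_inv, Real.mul_self_sqrt hV.le]
  field_simp

end PartitionVectors

section NormalizedCut

variable {n k : ℕ} {W : Matrix (Fin n) (Fin n) ℝ}

theorem wcut_comm (hsym : W.IsSymm) (X Y : Finset (Fin n)) : wcut W X Y = wcut W Y X := by
  unfold wcut
  refine sum_comm.trans ?_
  exact sum_congr rfl fun j _ => sum_congr rfl fun i _ => hsym.apply j i

theorem sum_wcut_partSet (P : Fin n → Fin k) (X : Finset (Fin n)) :
    ∑ b, wcut W X (partSet P b) = gvol W X := by
  unfold wcut gvol gdeg
  rw [sum_comm]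
  exact sum_congr rfl fun i _ => sum_fiberwise univ P (W i ·)

theorem fkCut_eq_sum_one_sub (hsym : W.IsSymm) (hd : ∀ i, 0 < gdeg W i) {P : Fin n → Fin k}
    (hP : Function.Surjective P) :
    fkCut W P = ∑ a, (1 - wcut W (partSet P a) (partSet P a) / gvol W (partSet P a)) := by
  set F : Fin k → Fin k → ℝ := fun a b => wcut W (partSet P a) (partSet P b) / gvol W (partSet P a)
  have hrow : ∀ a, ∑ b ∈ univ.erase a, F a b = 1 - F a a := fun a => by
    rw [sum_erase_eq_sub (mem_univ a), ← sum_div, sum_wcut_partSet,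
      div_self (gvol_partSet_pos hd hP a).ne']
  calc fkCut W P = ∑ a, ∑ b ∈ univ.filter (a < ·), (F a b + F b a) := by
        refine sum_congr rfl fun a _ => sum_congr rfl fun b _ => ?_
        simp only [F, wcut_comm hsym (partSet P b)]
        ring
    _ = ∑ a, (1 - F a a) := by
        rw [sum_sum_filter_lt_add_swap]
        exact sum_congr rfl fun a _ => hrow a

end NormalizedCut

theorem statement9_general {n : ℕ} (W : Matrix (Fin n) (Fin n) ℝ)
    (hsym : W.IsSymm)
    (hd : ∀ i, 0 < gdeg W i)
    (lam : Fin n → ℝ) (u : Fin n → Fin n → ℝ)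
    (hmono : Monotone lam)
    (hortho : IsOrthonormalSys u)
    (heig : ∀ i, normLap W *ᵥ u i = lam i • u i) :
    ∀ k : ℕ, 2 ≤ k → k ≤ n →
      ∑ i ∈ univ.filter (fun i : Fin n => (i : ℕ) < k), lam i ≤ fkMin k W := by
  intro k hk2 hkn
  have : Nonempty (Fin k) := ⟨⟨0, by omega⟩⟩
  refine le_csInf ⟨_, _, Function.invFun_surjective (Fin.castLE_injective hkn), rfl⟩ ?_
  rintro _ ⟨P, hP, rfl⟩
  set b := hortho.toOrthonormalBasis
  have hbeig : ∀ i, toEuclideanLin (normLap W) (b i) = lam i • b i := fun i => by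
    simp [b, toLpLin_toLp, heig]
  rw [fkCut_eq_sum_one_sub hsym hd hP, ← sum_congr rfl fun a _ => inner_partVec_normLap hd hP a]
  exact b.sum_filter_lt_le_sum_inner_map_self _ hmono hbeig (orthonormal_partVec hd hP)
    (by omega) hkn

/-- `f_k(G) ≥ ∑_{i=1}^k λ_i`. -/
theorem statement9 {n : ℕ} (W : Matrix (Fin n) (Fin n) ℝ)
    (hsym : W.IsSymm) (hnn : ∀ i j, 0 ≤ W i j) (hdiag : ∀ i, W i i = 0)
    (hd : ∀ i, 0 < gdeg W i) (hvol : gvol W Finset.univ = 1)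
    (lam : Fin n → ℝ) (u : Fin n → Fin n → ℝ)
    (hmono : Monotone lam)
    (hortho : IsOrthonormalSys u)
    (heig : ∀ i, normLap W *ᵥ u i = lam i • u i)
    (h0 : ∀ i : Fin n, (i : ℕ) = 0 → lam i = 0) :
    ∀ k : ℕ, 2 ≤ k → k ≤ n →
      ∑ i ∈ univ.filter (fun i : Fin n => (i : ℕ) < k), lam i ≤ fkMin k W :=
  statement9_general W hsym hd lam u hmono hortho heig
end
end
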